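/- arXiv:2309.07630 — 2 statements merged into one kernel-verified Lean document; each statement's English description precedes it below -/
import Mathlib

section
/- Approximate greedy guarantee: Let g be a monotone nondecreasing nonnegative set function on [n] with g(∅)=0, submodularity ratio κ ∈ (0,1] and curvature c ∈ (0,1]. Let S† = {s¹,…,s^H} be built incrementally so that g(S^{l−1}∪{s^l}) ≥ max_{s∈[n]} g(S^{l−1}∪{s}) − τ_l with τ_l ≥ 0 for each l. Then g(S†) ≥ (1/c)(1 − e^{−cκ}) · max_{|S|≤H} g(S) − Σ_{l=1}^H τ_l. -/
/-!
Along the greedy sequence track the potential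
`Φₜ = g(Sᵗ) + Bₘ(rₜ) · (g(Sᵗ ∪ S) - g(Sᵗ))`, where `m = H - t` steps remain, `rₜ = |S \ Sᵗ|`
and `Bₘ(r) = min(1, (1 - (1 - cκ/r)ᵐ)/c)`. Weak submodularity and the greedy rule bound the gap
`g(Sᵗ ∪ S) - g(Sᵗ)` by `rₜ/κ` times the gain of step `t` plus `τₜ`. By curvature, a step outside `S`
shrinks the gap by at most `c` times its gain; a step inside `S` shrinks it by the full gain but
also lowers `rₜ`, which `B` rewards just enough. Hence `Φₜ ≤ Φₜ₊₁ + τₜ`, so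
`B_H(|S|) · g(S) = Φ₀ ≤ Φ_H + ∑ τ = g(S^H) + ∑ τ`, and `B_H(|S|) ≥ (1 - e^{-cκ})/c` because
`(1 - cκ/K)^K ≤ e^{-cκ}`.
-/

open Finset

lemma one_sub_mul_pow_le_pow_succ {a a' c : ℝ} (hc0 : 0 ≤ c) (hc1 : c ≤ 1) (ha0 : 0 ≤ a)
    (ha1 : a ≤ 1) (hv0 : 0 ≤ 1 - c * a') (hkey : a ^ 2 ≤ (1 - a) * (a' - a)) (m : ℕ)
    (hm : 1 - c ≤ (1 - c * a') ^ m) :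
    (1 - a) * (1 - c * a') ^ m + a * (1 - c) ≤ (1 - c * a) ^ (m + 1) := by
  have haa' : a ≤ a' := by
    by_contra! h
    nlinarith [mul_nonneg (sub_nonneg.2 ha1) (sub_nonneg.2 h.le)]
  have hv1 : 1 - c * a' ≤ 1 := by nlinarith
  have hw0 : 0 ≤ 1 - c * a := by nlinarith
  induction m with
  | zero => simp only [pow_zero, zero_add, pow_one]; nlinarith
  | succ m ih =>
    have hm' : 1 - c ≤ (1 - c * a') ^ m :=
      hm.trans (pow_le_pow_of_le_one hv0 hv1 m.le_succ)
    -- `1 - c * a = (1 - a) + a * (1 - c)`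
    have hone : (1 - a) * (1 - c * a') ^ (m + 1) + a * (1 - c)
        ≤ (1 - c * a) * ((1 - a) * (1 - c * a') ^ m + a * (1 - c)) := by
      rw [pow_succ]
      nlinarith [mul_nonneg (sub_nonneg.2 hm') (mul_nonneg (mul_nonneg (sub_nonneg.2 ha1) hc0)
          (sub_nonneg.2 haa')), mul_nonneg (mul_nonneg hc0 (sub_nonneg.2 hc1)) (sub_nonneg.2 hkey)]
    calc _ ≤ (1 - c * a) * ((1 - a) * (1 - c * a') ^ m + a * (1 - c)) := hone
      _ ≤ (1 - c * a) * (1 - c * a) ^ (m + 1) := mul_le_mul_of_nonneg_left (ih hm') hw0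
      _ = (1 - c * a) ^ (m + 1 + 1) := (pow_succ' _ _).symm

lemma mul_gap_le_gain_add_mul_gap {κ θ b b' r ρ τ E E' : ℝ} (hgap : κ * E ≤ r * (ρ + τ))
    (hb' : b' ≤ b + κ / r * (1 - θ * b)) (hEE' : E - θ * ρ ≤ E') (hθ : 0 < θ) (hb : 0 ≤ b)
    (hθb : θ * b ≤ 1) (hθb' : θ * b' ≤ 1) (hr : 0 ≤ r) (hρ : 0 ≤ ρ) (hτ : 0 ≤ τ) (hE : 0 ≤ E)
    (hE' : 0 ≤ E') :
    b' * E ≤ ρ + τ + b * E' := by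
  rcases le_or_gt E (θ * ρ) with hsmall | hlarge
  · have : θ * (b' * E) ≤ θ * ρ := by nlinarith
    nlinarith [mul_nonneg hb hE']
  · have hrate : κ / r * E ≤ ρ + τ := by
      rcases hr.eq_or_lt with rfl | hr
      · simp only [div_zero, zero_mul]; linarith
      · rw [div_mul_eq_mul_div, div_le_iff₀ hr]; linarith
    calc b' * E ≤ b * E + (1 - θ * b) * (κ / r * E) := by nlinarith
      _ ≤ b * E + (1 - θ * b) * (ρ + τ) := by gcongr
      _ ≤ ρ + τ + b * E' := by nlinarith [mul_nonneg (mul_nonneg hθ.le hb) hτ]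

/-- `Bₘ(r)`, the weight of the remaining gap; at `r = 0` the division by zero makes it `0`. -/
noncomputable def gapWeight (c κ : ℝ) (m r : ℕ) : ℝ := min 1 ((1 - (1 - c * κ / r) ^ m) / c)

section gapWeight

variable {c κ : ℝ}

lemma one_sub_mul_div_nonneg (hc0 : 0 ≤ c) (hc1 : c ≤ 1) (hκ0 : 0 ≤ κ) (hκ1 : κ ≤ 1) (r : ℕ) :
    0 ≤ 1 - c * κ / r := by
  have hcκ : c * κ ≤ 1 := mul_le_one₀ hc1 hκ0 hκ1
  rcases Nat.eq_zero_or_pos r with rfl | hr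
  · simp
  · have : c * κ / r ≤ c * κ := div_le_self (by positivity) (by exact_mod_cast hr)
    linarith

lemma one_sub_mul_div_le_one (hc0 : 0 ≤ c) (hκ0 : 0 ≤ κ) (r : ℕ) : 1 - c * κ / r ≤ 1 := by
  have : 0 ≤ c * κ / r := by positivity
  linarith

lemma gapWeight_nonneg (hc0 : 0 < c) (hc1 : c ≤ 1) (hκ0 : 0 ≤ κ) (hκ1 : κ ≤ 1) (m r : ℕ) :
    0 ≤ gapWeight c κ m r :=
  le_min zero_le_one <| div_nonneg (sub_nonneg.2 <| pow_le_one₀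
    (one_sub_mul_div_nonneg hc0.le hc1 hκ0 hκ1 r) (one_sub_mul_div_le_one hc0.le hκ0 r)) hc0.le

lemma gapWeight_le_one (m r : ℕ) : gapWeight c κ m r ≤ 1 := min_le_left _ _

@[simp]
lemma gapWeight_zero (r : ℕ) : gapWeight c κ 0 r = 0 := by simp [gapWeight]

lemma gapWeight_succ_le (hc0 : 0 < c) (hc1 : c ≤ 1) (hκ0 : 0 ≤ κ) (m r : ℕ) :
    gapWeight c κ (m + 1) r ≤ gapWeight c κ m r + κ / r * (1 - c * gapWeight c κ m r) := by
  set u := 1 - c * κ / r with hu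
  have hle : gapWeight c κ (m + 1) r ≤ (1 - u ^ (m + 1)) / c := min_le_right _ _
  rcases le_total ((1 - u ^ m) / c) 1 with hcap | hcap
  · have heq : gapWeight c κ m r = (1 - u ^ m) / c := min_eq_right hcap
    have hrec : (1 - u ^ (m + 1)) / c = (1 - u ^ m) / c + κ / r * (1 - c * ((1 - u ^ m) / c)) := by
      rw [hu]; field_simp; ring
    rw [heq, ← hrec]
    exact hle
  · rw [show gapWeight c κ m r = 1 from min_eq_left hcap]
    have : 0 ≤ κ / r * (1 - c * 1) := mul_nonneg (by positivity) (by linarith)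
    linarith [gapWeight_le_one (c := c) (κ := κ) (m + 1) r]

lemma gapWeight_succ_succ_le (hc0 : 0 < c) (hc1 : c ≤ 1) (hκ0 : 0 ≤ κ) (hκ1 : κ ≤ 1) (m : ℕ)
    {r : ℕ} (hr : 1 ≤ r) :
    gapWeight c κ (m + 1) (r + 1) ≤ gapWeight c κ m r + κ / (r + 1) * (1 - gapWeight c κ m r) := by
  have hr0 : (0 : ℝ) < r := by exact_mod_cast hr
  rcases le_total ((1 - (1 - c * κ / r) ^ m) / c) 1 with hcap | hcap
  · have heq : gapWeight c κ m r = (1 - (1 - c * (κ / r)) ^ m) / c := by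
      rw [← mul_div_assoc]; exact min_eq_right hcap
    have hvm : 1 - c ≤ (1 - c * (κ / r)) ^ m := by
      rw [← mul_div_assoc]; linarith [(div_le_one hc0).1 hcap]
    have hkey : (κ / (r + 1)) ^ 2 ≤ (1 - κ / (r + 1)) * (κ / r - κ / (r + 1)) := by
      rw [div_sub_div _ _ hr0.ne' (by positivity), div_pow, one_sub_div (by positivity),
        div_mul_div_comm, div_le_div_iff₀ (by positivity) (by positivity)]
      nlinarith [mul_nonneg (mul_nonneg (mul_nonneg hκ0 hr0.le) (sub_nonneg.2 hκ1))
        (sq_nonneg ((r : ℝ) + 1))]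
    have hpow := one_sub_mul_pow_le_pow_succ hc0.le hc1 (by positivity)
      ((div_le_one (by positivity)).2 (by linarith))
      (by rw [← mul_div_assoc]; exact one_sub_mul_div_nonneg hc0.le hc1 hκ0 hκ1 r) hkey m hvm
    have hle : gapWeight c κ (m + 1) (r + 1) ≤ (1 - (1 - c * (κ / (r + 1))) ^ (m + 1)) / c := by
      rw [← mul_div_assoc]; exact_mod_cast min_le_right _ _
    have hrhs : (1 - (1 - c * (κ / r)) ^ m) / c
          + κ / (r + 1) * (1 - (1 - (1 - c * (κ / r)) ^ m) / c)
        = (1 - ((1 - κ / (r + 1)) * (1 - c * (κ / r)) ^ m + κ / (r + 1) * (1 - c))) / c := by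
      field_simp; ring
    rw [heq, hrhs]
    exact hle.trans (div_le_div_of_nonneg_right (by linarith) hc0.le)
  · rw [show gapWeight c κ m r = 1 from min_eq_left hcap, sub_self, mul_zero, add_zero]
    exact gapWeight_le_one _ _

lemma div_le_gapWeight (hc0 : 0 < c) (hc1 : c ≤ 1) (hκ0 : 0 ≤ κ) (hκ1 : κ ≤ 1) {K H : ℕ}
    (hK : 1 ≤ K) (hKH : K ≤ H) : (1 - Real.exp (-(c * κ))) / c ≤ gapWeight c κ H K := by
  have hcκ : c * κ ≤ 1 := mul_le_one₀ hc1 hκ0 hκ1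
  refine le_min ((div_le_one hc0).2 ?_) (div_le_div_of_nonneg_right (sub_le_sub_left ?_ _) hc0.le)
  · linarith [Real.add_one_le_exp (-(c * κ)), mul_le_of_le_one_right hc0.le hκ1]
  calc (1 - c * κ / K) ^ H ≤ (1 - c * κ / K) ^ K :=
        pow_le_pow_of_le_one (one_sub_mul_div_nonneg hc0.le hc1 hκ0 hκ1 K)
          (one_sub_mul_div_le_one hc0.le hκ0 K) hKH
    _ ≤ Real.exp (-(c * κ)) :=
        Real.one_sub_div_pow_le_exp_neg (hcκ.trans (by exact_mod_cast hK))

end gapWeight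

section Greedy

variable {α : Type*} [DecidableEq α]

def WeaklySubmodular (g : Finset α → ℝ) (κ : ℝ) : Prop :=
  ∀ S Ω : Finset α, κ * (g (S ∪ Ω) - g S) ≤ ∑ ω ∈ Ω \ S, (g (insert ω S) - g S)

def CurvatureAtMost (g : Finset α → ℝ) (c : ℝ) : Prop :=
  ∀ S Ω : Finset α, ∀ ω, S ⊆ Ω → ω ∉ Ω →
    (1 - c) * (g (insert ω S) - g S) ≤ g (insert ω Ω) - g Ω

variable {g : Finset α → ℝ} {c κ τ : ℝ} {S T : Finset α} {x : α}

lemma WeaklySubmodular.mul_gap_le (hg : WeaklySubmodular g κ)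
    (hgreedy : ∀ i, g (insert i T) - τ ≤ g (insert x T)) :
    κ * (g (T ∪ S) - g T) ≤ (S \ T).card * (g (insert x T) - g T + τ) := by
  calc κ * (g (T ∪ S) - g T) ≤ ∑ ω ∈ S \ T, (g (insert ω T) - g T) := hg T S
    _ ≤ (S \ T).card • (g (insert x T) - g T + τ) :=
        sum_le_card_nsmul _ _ _ fun ω _ ↦ by linarith [hgreedy ω]
    _ = _ := nsmul_eq_mul _ _

lemma CurvatureAtMost.gap_sub_le (hg : CurvatureAtMost g c) (hx : x ∉ S \ T) :
    g (T ∪ S) - g T - c * (g (insert x T) - g T) ≤ g (insert x T ∪ S) - g (insert x T) := by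
  by_cases hxT : x ∈ T
  · simp [insert_eq_of_mem hxT]
  · have hxS : x ∉ S := fun h ↦ hx (mem_sdiff.2 ⟨h, hxT⟩)
    have := hg T (T ∪ S) x subset_union_left (by simp [hxT, hxS])
    rw [← insert_union] at this
    linarith

variable (g c κ S) in
noncomputable def greedyPotential (m : ℕ) (T : Finset α) : ℝ :=
  g T + gapWeight c κ m (S \ T).card * (g (T ∪ S) - g T)

@[simp]
lemma greedyPotential_zero : greedyPotential g c κ S 0 T = g T := by
  simp [greedyPotential]

lemma greedyPotential_succ_le (hmono : Monotone g) (hratio : WeaklySubmodular g κ)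
    (hcurv : CurvatureAtMost g c) (hc0 : 0 < c) (hc1 : c ≤ 1) (hκ0 : 0 ≤ κ) (hκ1 : κ ≤ 1)
    (hτ : 0 ≤ τ) (hgreedy : ∀ i, g (insert i T) - τ ≤ g (insert x T)) (m : ℕ) :
    greedyPotential g c κ S (m + 1) T ≤ greedyPotential g c κ S m (insert x T) + τ := by
  have hρ : 0 ≤ g (insert x T) - g T := sub_nonneg.2 (hmono (subset_insert _ _))
  have hE : 0 ≤ g (T ∪ S) - g T := sub_nonneg.2 (hmono subset_union_left)
  have hE' : 0 ≤ g (insert x T ∪ S) - g (insert x T) := sub_nonneg.2 (hmono subset_union_left)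
  have hgap := hratio.mul_gap_le (S := S) hgreedy
  have hB := gapWeight_nonneg hc0 hc1 hκ0 hκ1
  unfold greedyPotential
  by_cases hx : x ∈ S \ T
  · have hunion : insert x T ∪ S = T ∪ S := by
      rw [insert_union, insert_eq_of_mem (mem_union_right _ (mem_sdiff.1 hx).1)]
    have hcard : (S \ T).card = (S \ insert x T).card + 1 := by
      rw [sdiff_insert, card_erase_add_one hx]
    rw [hcard] at hgap ⊢
    push_cast at hgap
    rcases Nat.eq_zero_or_pos (S \ insert x T).card with hlast | hpos
    · -- the last unpicked element of `S` is picked: the gap equals the gain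
      have hST : T ∪ S = insert x T := by
        rw [← hunion, union_eq_left.2 (sdiff_eq_empty_iff_subset.1 (card_eq_zero.1 hlast))]
      rw [hlast, hunion, hST, sub_self, mul_zero]
      nlinarith [mul_le_of_le_one_left hρ (gapWeight_le_one (c := c) (κ := κ) (m + 1) 1)]
    · set r := (S \ insert x T).card
      have hweight : gapWeight c κ (m + 1) (r + 1)
          ≤ gapWeight c κ m r + κ / (r + 1) * (1 - 1 * gapWeight c κ m r) := by
        rw [one_mul]; exact gapWeight_succ_succ_le hc0 hc1 hκ0 hκ1 m hpos
      have := mul_gap_le_gain_add_mul_gap hgap hweight (by rw [hunion]; linarith) one_pos (hB _ _)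
        (by rw [one_mul]; exact gapWeight_le_one _ _) (by rw [one_mul]; exact gapWeight_le_one _ _)
        (by positivity) hρ hτ hE hE'
      linarith
  · have hsd : S \ insert x T = S \ T := by
      ext y; simp only [mem_sdiff, mem_insert] at hx ⊢; grind
    rw [hsd]
    have hcB : ∀ m r, c * gapWeight c κ m r ≤ 1 := fun m r ↦
      mul_le_one₀ hc1 (hB m r) (gapWeight_le_one m r)
    have := mul_gap_le_gain_add_mul_gap hgap (gapWeight_succ_le hc0 hc1 hκ0 m _)
      (hcurv.gap_sub_le hx) hc0 (hB _ _) (hcB _ _) (hcB _ _) (by positivity) hρ hτ hE hE'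
    linarith

lemma filter_val_lt_succ {H t : ℕ} (ht : t < H) :
    univ.filter (fun l : Fin H ↦ (l : ℕ) < t + 1)
      = insert ⟨t, ht⟩ (univ.filter (fun l : Fin H ↦ (l : ℕ) < t)) := by
  ext l
  simp only [mem_filter, mem_univ, true_and, mem_insert, Fin.ext_iff]
  omega

lemma greedyPotential_le_add_sum {H : ℕ} (T : ℕ → Finset α) (x : Fin H → α) (τ : Fin H → ℝ)
    (hmono : Monotone g) (hratio : WeaklySubmodular g κ) (hcurv : CurvatureAtMost g c)
    (hc0 : 0 < c) (hc1 : c ≤ 1) (hκ0 : 0 ≤ κ) (hκ1 : κ ≤ 1) (hτ : ∀ l, 0 ≤ τ l)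
    (hT : ∀ l : Fin H, T (l + 1) = insert (x l) (T l))
    (hgreedy : ∀ l : Fin H, ∀ i, g (insert i (T l)) - τ l ≤ g (insert (x l) (T l))) :
    greedyPotential g c κ S H (T 0) ≤ g (T H) + ∑ l, τ l := by
  suffices h : ∀ t ≤ H, greedyPotential g c κ S H (T 0) ≤ greedyPotential g c κ S (H - t) (T t)
      + ∑ l ∈ univ.filter (fun l : Fin H ↦ (l : ℕ) < t), τ l by
    simpa [filter_true_of_mem] using h H le_rfl
  intro t
  induction t with
  | zero => simp
  | succ t ih =>
    intro ht
    have step := greedyPotential_succ_le (S := S) hmono hratio hcurv hc0 hc1 hκ0 hκ1 (hτ _)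
      (hgreedy ⟨t, ht⟩) (H - (t + 1))
    rw [show H - (t + 1) + 1 = H - t by omega, ← hT ⟨t, ht⟩] at step
    rw [filter_val_lt_succ ht, sum_insert (by simp)]
    linarith [ih (by omega)]

end Greedy

theorem approximate_greedy_guarantee_general
    (n H : ℕ) (g : Finset (Fin n) → ℝ)
    (hmono : ∀ S₁ S₂ : Finset (Fin n), S₁ ⊆ S₂ → g S₁ ≤ g S₂)
    (h0 : g ∅ = 0)
    (κ c : ℝ) (hκ0 : 0 < κ) (hκ1 : κ ≤ 1) (hc0 : 0 < c) (hc1 : c ≤ 1)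
    (hratio : ∀ S Ω : Finset (Fin n),
        κ * (g (S ∪ Ω) - g S) ≤ ∑ ω ∈ Ω \ S, (g (insert ω S) - g S))
    (hcurv : ∀ S Ω : Finset (Fin n), ∀ ω : Fin n, S ⊆ Ω → ω ∉ Ω →
        (1 - c) * (g (insert ω S) - g S) ≤ g (insert ω Ω) - g Ω)
    (s : Fin H → Fin n) (τ : Fin H → ℝ) (hτ : ∀ l, 0 ≤ τ l)
    -- S^l = {s¹, …, s^l}
    (Sl : ℕ → Finset (Fin n))
    (hSl : ∀ l : ℕ, Sl l = (Finset.univ.filter (fun i : Fin H => (i : ℕ) < l)).image s)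
    (hgreedy : ∀ l : Fin H, ∀ i : Fin n,
        g (insert i (Sl l)) - τ l ≤ g (insert (s l) (Sl l))) :
    ∀ S : Finset (Fin n), S.card ≤ H →
      (1 / c) * (1 - Real.exp (-(c * κ))) * g S - ∑ l, τ l ≤ g (Sl H) := by
  intro S hS
  have hg0 : ∀ T, 0 ≤ g T := fun T ↦ h0 ▸ hmono _ _ (empty_subset T)
  have hT : ∀ l : Fin H, Sl (l + 1) = insert (s l) (Sl l) := fun l ↦ by
    rw [hSl, hSl, filter_val_lt_succ l.isLt, image_insert]
  have hΦ := greedyPotential_le_add_sum (S := S) Sl s τ (fun _ _ h ↦ hmono _ _ h) hratio hcurv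
    hc0 hc1 hκ0.le hκ1 hτ hT hgreedy
  have hSl0 : Sl 0 = ∅ := by simp [hSl]
  simp only [greedyPotential, hSl0, h0, sdiff_empty, empty_union, sub_zero, zero_add] at hΦ
  rcases S.eq_empty_or_nonempty with rfl | hne
  · have : 0 ≤ ∑ l, τ l := sum_nonneg fun l _ ↦ hτ l
    rw [h0, mul_zero, zero_sub]
    linarith [hg0 (Sl H)]
  · calc (1 / c) * (1 - Real.exp (-(c * κ))) * g S - ∑ l, τ l
        = (1 - Real.exp (-(c * κ))) / c * g S - ∑ l, τ l := by ring
      _ ≤ gapWeight c κ H S.card * g S - ∑ l, τ l := by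
        gcongr
        · exact hg0 S
        · exact div_le_gapWeight hc0 hc1 hκ0.le hκ1 hne.card_pos hS
      _ ≤ g (Sl H) := by linarith

theorem approximate_greedy_guarantee
    (n H : ℕ) (hH : 1 ≤ H) (g : Finset (Fin n) → ℝ)
    (hnonneg : ∀ S, 0 ≤ g S)
    (hmono : ∀ S₁ S₂ : Finset (Fin n), S₁ ⊆ S₂ → g S₁ ≤ g S₂)
    (h0 : g ∅ = 0)
    (κ c : ℝ) (hκ0 : 0 < κ) (hκ1 : κ ≤ 1) (hc0 : 0 < c) (hc1 : c ≤ 1)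
    (hratio : ∀ S Ω : Finset (Fin n),
        κ * (g (S ∪ Ω) - g S) ≤ ∑ ω ∈ Ω \ S, (g (insert ω S) - g S))
    (hcurv : ∀ S Ω : Finset (Fin n), ∀ ω : Fin n, S ⊆ Ω → ω ∉ Ω →
        (1 - c) * (g (insert ω S) - g S) ≤ g (insert ω Ω) - g Ω)
    (s : Fin H → Fin n) (τ : Fin H → ℝ) (hτ : ∀ l, 0 ≤ τ l)
    -- S^l = {s¹, …, s^l}
    (Sl : ℕ → Finset (Fin n))
    (hSl : ∀ l : ℕ, Sl l = (Finset.univ.filter (fun i : Fin H => (i : ℕ) < l)).image s)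
    (hgreedy : ∀ l : Fin H, ∀ i : Fin n,
        g (insert i (Sl l)) - τ l ≤ g (insert (s l) (Sl l))) :
    ∀ S : Finset (Fin n), S.card ≤ H →
      (1 / c) * (1 - Real.exp (-(c * κ))) * g S - ∑ l, τ l ≤ g (Sl H) :=
  approximate_greedy_guarantee_general n H g hmono h0 κ c hκ0 hκ1 hc0 hc1 hratio hcurv s τ hτ Sl hSl
    hgreedy
end

section
/- Submodularity ratio lower bound for concave composition: suppose f : ℝ^n → ℝ is differentiable and concave on a convex set X, x* ∈ X, and for every coordinate ω, both min_{x∈X}|(∇f(x))_ω| and max_{x∈X}|(∇f(x))_ω| exist with max > 0. If the set function g(S) = f(x*(S)) (where x*(S) zeroes out coordinates outside S) is monotone nondecreasing with g(∅)=0, then its submodularity ratio κ satisfies κ ≥ min_{ω∈[n]} (min_{x∈X}|(∇f(x))_ω|)/(max_{x∈X}|(∇f(x))_ω|). -/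
open Finset RealInnerProductSpace

theorem submodularity_ratio_lower_bound_concave
    (n : ℕ) (hn : 0 < n)
    (X : Set (EuclideanSpace ℝ (Fin n))) (hXconv : Convex ℝ X)
    (f : EuclideanSpace ℝ (Fin n) → ℝ) (hdiff : Differentiable ℝ f)
    (hconc : ∀ y₁ ∈ X, ∀ y₂ ∈ X, f y₂ - f y₁ ≤ ⟪gradient f y₁, y₂ - y₁⟫)
    (xstar : EuclideanSpace ℝ (Fin n)) (hxstar : xstar ∈ X)
    (m M : Fin n → ℝ)
    (hm : ∀ ω, IsLeast {y : ℝ | ∃ x ∈ X, y = |gradient f x ω|} (m ω))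
    (hM : ∀ ω, IsGreatest {y : ℝ | ∃ x ∈ X, y = |gradient f x ω|} (M ω))
    (hMpos : ∀ ω, 0 < M ω)
    (xs : Finset (Fin n) → EuclideanSpace ℝ (Fin n))
    (hxs : ∀ S i, xs S i = if i ∈ S then xstar i else 0)
    (hseg : ∀ S : Finset (Fin n), ∀ ω : Fin n,
        segment ℝ (xs S) (xs (insert ω S)) ⊆ X)
    (g : Finset (Fin n) → ℝ) (hg : ∀ S, g S = f (xs S))
    (hmono : ∀ S₁ S₂ : Finset (Fin n), S₁ ⊆ S₂ → g S₁ ≤ g S₂)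
    (h0 : g ∅ = 0) :
    ∀ S Ω : Finset (Fin n),
      (Finset.univ.inf' (by
          have : Nonempty (Fin n) := Fin.pos_iff_nonempty.mp hn
          exact Finset.univ_nonempty) fun ω => m ω / M ω) *
        (g (S ∪ Ω) - g S) ≤ ∑ ω ∈ Ω \ S, (g (insert ω S) - g S) := by
  intro S Ω
  have hne : (Finset.univ : Finset (Fin n)).Nonempty := by
    have : Nonempty (Fin n) := Fin.pos_iff_nonempty.mp hn
    exact Finset.univ_nonempty
  set κ : ℝ := Finset.univ.inf' hne fun ω => m ω / M ω with hκdef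
  -- every xs T is in X
  have hmemX : ∀ T : Finset (Fin n), xs T ∈ X := fun T =>
    hseg T ⟨0, hn⟩ (left_mem_segment ℝ _ _)
  -- gradient vs fderiv
  have hgradinner : ∀ x v, ⟪gradient f x, v⟫ = fderiv ℝ f x v := by
    intro x v
    rw [gradient, ← InnerProductSpace.toDual_apply_apply,
      (InnerProductSpace.toDual ℝ (EuclideanSpace ℝ (Fin n))).apply_symm_apply]
  -- nonnegativity of m
  have hm0 : ∀ ω, 0 ≤ m ω := by
    intro ω
    obtain ⟨x, _, hx⟩ := (hm ω).1
    rw [hx]; exact abs_nonneg _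
  have hκ0 : 0 ≤ κ := by
    apply Finset.le_inf'
    intro ω _
    exact div_nonneg (hm0 ω) (hMpos ω).le
  have hκle : ∀ ω : Fin n, κ * M ω ≤ m ω := by
    intro ω
    have := Finset.inf'_le (fun ω => m ω / M ω) (Finset.mem_univ ω)
    calc κ * M ω ≤ (m ω / M ω) * M ω := by
          exact mul_le_mul_of_nonneg_right this (hMpos ω).le
      _ = m ω := div_mul_cancel₀ (m ω) (hMpos ω).ne'
  -- inner product formula
  have hinner : ∀ x : EuclideanSpace ℝ (Fin n), ∀ T : Finset (Fin n),
      S ⊆ T → ⟪x, xs T - xs S⟫ = ∑ ω ∈ T \ S, x ω * xstar ω := by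
    intro x T hST
    rw [PiLp.inner_apply]
    rw [← Finset.sum_subset (Finset.subset_univ (T \ S))]
    · apply Finset.sum_congr rfl
      intro i hi
      simp only [Finset.mem_sdiff] at hi
      simp [RCLike.inner_apply, PiLp.sub_apply, hxs, hi.1, hi.2]; ring
    · intro i _ hi
      simp only [Finset.mem_sdiff, not_and, not_not] at hi
      by_cases hiT : i ∈ T
      · have hiS := hi hiT
        simp [RCLike.inner_apply, PiLp.sub_apply, hxs, hiT, hiS]
      · have hiS : i ∉ S := fun h => hiT (hST h)
        simp [RCLike.inner_apply, PiLp.sub_apply, hxs, hiT, hiS]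
  -- MVT: for ω ∉ S, the increment is grad at an interior point times xstar ω
  have hMVT : ∀ ω : Fin n, ω ∉ S →
      ∃ ξ ∈ X, gradient f ξ ω * xstar ω = g (insert ω S) - g S := by
    intro ω hω
    set v : EuclideanSpace ℝ (Fin n) := xs (insert ω S) - xs S with hv
    set γ : ℝ → EuclideanSpace ℝ (Fin n) := fun θ => xs S + θ • v with hγ
    have hγd : ∀ θ : ℝ, HasDerivAt γ v θ := by
      intro θ
      have := ((hasDerivAt_id θ).smul_const v).const_add (xs S)
      rw [one_smul] at this
      exact this
    have hφd : ∀ θ : ℝ, HasDerivAt (f ∘ γ) (fderiv ℝ f (γ θ) v) θ := fun θ =>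
      (hdiff (γ θ)).hasFDerivAt.comp_hasDerivAt θ (hγd θ)
    obtain ⟨θ, hθ, hslope⟩ := exists_hasDerivAt_eq_slope (f ∘ γ)
      (fun θ => fderiv ℝ f (γ θ) v) one_pos
      (fun θ _ => (hφd θ).continuousAt.continuousWithinAt)
      (fun θ _ => hφd θ)
    have hγ0 : γ 0 = xs S := by simp [hγ]
    have hγ1 : γ 1 = xs (insert ω S) := by simp [hγ, hv]
    have hξX : γ θ ∈ X := by
      apply hseg S ω
      refine ⟨1 - θ, θ, by linarith [hθ.1, hθ.2], hθ.1.le, by ring, ?_⟩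
      simp only [hγ, hv]
      module
    refine ⟨γ θ, hξX, ?_⟩
    have h1 : ⟪gradient f (γ θ), v⟫ = fderiv ℝ f (γ θ) v := hgradinner _ _
    have h2 : ⟪gradient f (γ θ), v⟫ = ∑ i ∈ insert ω S \ S, gradient f (γ θ) i * xstar i :=
      hinner _ _ (Finset.subset_insert ω S)
    have h3 : insert ω S \ S = {ω} := by
      ext i
      simp only [Finset.mem_sdiff, Finset.mem_insert, Finset.mem_singleton]
      constructor
      · rintro ⟨h | h, hi⟩
        · exact h
        · exact absurd h hi
      · rintro rfl; exact ⟨Or.inl rfl, hω⟩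
    rw [h3, Finset.sum_singleton] at h2
    rw [← h2, h1, hslope]
    simp [hγ0, hγ1, hg]
  -- per-element inequality
  have hper : ∀ ω ∈ Ω \ S,
      κ * (gradient f (xs S) ω * xstar ω) ≤ g (insert ω S) - g S := by
    intro ω hω
    have hωS : ω ∉ S := (Finset.mem_sdiff.mp hω).2
    obtain ⟨ξ, hξX, hξ⟩ := hMVT ω hωS
    set a := gradient f (xs S) ω
    set c := gradient f ξ ω
    set t := xstar ω
    have hΔ : 0 ≤ g (insert ω S) - g S :=
      sub_nonneg.mpr (hmono S (insert ω S) (Finset.subset_insert ω S))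
    have hct : 0 ≤ c * t := hξ ▸ hΔ
    have ha : |a| ≤ M ω := (hM ω).2 ⟨xs S, hmemX S, rfl⟩
    have hc : m ω ≤ |c| := (hm ω).2 ⟨ξ, hξX, rfl⟩
    rw [← hξ]
    rcases le_or_gt (a * t) 0 with hat | hat
    · nlinarith
    · have h1 : a * t ≤ |a| * |t| := by
        rw [← abs_mul]; exact le_abs_self _
      have h2 : |c| * |t| = c * t := by
        rw [← abs_mul]; exact abs_of_nonneg hct
      calc κ * (a * t) ≤ κ * (|a| * |t|) := mul_le_mul_of_nonneg_left h1 hκ0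
        _ ≤ κ * (M ω * |t|) :=
            mul_le_mul_of_nonneg_left (mul_le_mul_of_nonneg_right ha (abs_nonneg t)) hκ0
        _ = (κ * M ω) * |t| := by ring
        _ ≤ m ω * |t| := mul_le_mul_of_nonneg_right (hκle ω) (abs_nonneg t)
        _ ≤ |c| * |t| := mul_le_mul_of_nonneg_right hc (abs_nonneg t)
        _ = c * t := h2
  -- putting it together
  have hconc' : g (S ∪ Ω) - g S ≤ ∑ ω ∈ Ω \ S, gradient f (xs S) ω * xstar ω := by
    have h := hconc (xs S) (hmemX S) (xs (S ∪ Ω)) (hmemX (S ∪ Ω))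
    rw [hinner _ _ Finset.subset_union_left] at h
    have hsd : (S ∪ Ω) \ S = Ω \ S := by
      ext i; simp [Finset.mem_sdiff, Finset.mem_union]; tauto
    rw [hsd] at h
    rw [hg S, hg (S ∪ Ω)]
    exact h
  calc κ * (g (S ∪ Ω) - g S)
      ≤ κ * ∑ ω ∈ Ω \ S, gradient f (xs S) ω * xstar ω :=
        mul_le_mul_of_nonneg_left hconc' hκ0
    _ = ∑ ω ∈ Ω \ S, κ * (gradient f (xs S) ω * xstar ω) := Finset.mul_sum _ _ _
    _ ≤ ∑ ω ∈ Ω \ S, (g (insert ω S) - g S) := Finset.sum_le_sum hper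
end
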